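/- Let G be a locally finite simple C4-free graph with unweighted normalized Laplacian, and x a vertex. Then CD(0,∞) holds at x if and only if for all functions f on N(x): Σ_{y,z ∈ S1(x), y∼z} (d_x/d_y)|2f(y) − f(z)|² + 4 Σ_{y ∈ S1(x)} (d_x/d_y) f(y)² + 2(Σ_{y∼x} f(y))² − 2 d_x Σ_{y∼x} f(y)² ≥ 0. -/
import Mathlib


open Finset

variable {V : Type*}

/-- Unweighted non-normalized graph Laplacian. -/
noncomputable def nnLap (G : SimpleGraph V) [G.LocallyFinite] (f : V → ℝ) (x : V) : ℝ :=
  ∑ y ∈ G.neighborFinset x, (f y - f x)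

/-- Unweighted normalized graph Laplacian. -/
noncomputable def nLap (G : SimpleGraph V) [G.LocallyFinite] (f : V → ℝ) (x : V) : ℝ :=
  (∑ y ∈ G.neighborFinset x, (f y - f x)) / (G.degree x : ℝ)

/-- Bakry–Émery carré du champ operator Γ for a Laplacian `L`. -/
noncomputable def gam (L : (V → ℝ) → V → ℝ) (f g : V → ℝ) (x : V) : ℝ :=
  (L (f * g) x - f x * L g x - g x * L f x) / 2

/-- Iterated carré du champ operator Γ₂ for a Laplacian `L`. -/
noncomputable def gam2 (L : (V → ℝ) → V → ℝ) (f g : V → ℝ) (x : V) : ℝ :=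
  (L (gam L f g) x - gam L f (L g) x - gam L (L f) g x) / 2

/-- `G` has no 4-cycle subgraph, equivalently any two distinct vertices have at
most one common neighbor. -/
def C4Free (G : SimpleGraph V) : Prop :=
  ∀ ⦃u v a b : V⦄, u ≠ v → G.Adj u a → G.Adj a v → G.Adj u b → G.Adj b v → a = b

set_option linter.unusedSectionVars false

section helpers

variable (G : SimpleGraph V) [G.LocallyFinite] [DecidableRel G.Adj]

lemma nLap_eq (g : V → ℝ) (v : V) :
    nLap G g v = ((∑ w ∈ G.neighborFinset v, g w) - (G.degree v : ℝ) * g v) / (G.degree v : ℝ) := by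
  unfold nLap
  congr 1
  rw [Finset.sum_sub_distrib, Finset.sum_const, nsmul_eq_mul,
    SimpleGraph.card_neighborFinset_eq_degree]

lemma gam_eq (L : (V → ℝ) → V → ℝ) (f g : V → ℝ) (v : V) :
    gam L f g v = (L (f * g) v - f v * L g v - g v * L f v) / 2 := rfl

lemma gam2_eq (L : (V → ℝ) → V → ℝ) (f g : V → ℝ) (v : V) :
    gam2 L f g v = (L (gam L f g) v - gam L f (L g) v - gam L (L f) g v) / 2 := rfl

lemma gam_comm (L : (V → ℝ) → V → ℝ) (f g : V → ℝ) (v : V) :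
    gam L f g v = gam L g f v := by
  unfold gam; rw [mul_comm g f]; ring

lemma gam_self (f : V → ℝ) (v : V) (hv : (G.degree v : ℝ) ≠ 0) :
    gam (nLap G) f f v
      = (∑ w ∈ G.neighborFinset v, (f w - f v) ^ 2) / (2 * (G.degree v : ℝ)) := by
  rw [gam_eq, nLap_eq, nLap_eq]
  have h : ∑ w ∈ G.neighborFinset v, (f w - f v) ^ 2
      = (∑ w ∈ G.neighborFinset v, (f * f) w) - 2 * f v * (∑ w ∈ G.neighborFinset v, f w)
        + (G.degree v : ℝ) * f v ^ 2 := by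
    rw [Finset.mul_sum, ← Finset.sum_sub_distrib,
      ← SimpleGraph.card_neighborFinset_eq_degree, ← nsmul_eq_mul, ← Finset.sum_const,
      ← Finset.sum_add_distrib]
    exact Finset.sum_congr rfl fun w _ => by simp only [Pi.mul_apply]; ring
  rw [h]
  have hv2 : (f * f) v = f v * f v := rfl
  rw [hv2]
  field_simp
  ring


lemma nLap_shift (f : V → ℝ) (c : ℝ) (v : V) :
    nLap G (fun w => f w - c) v = nLap G f v := by
  unfold nLap
  congr 1
  exact Finset.sum_congr rfl fun w _ => by ring

lemma nLap_lin (a b : V → ℝ) (c : ℝ) (v : V) :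
    nLap G (fun w => a w - c * b w) v = nLap G a v - c * nLap G b v := by
  unfold nLap
  rw [← mul_div_assoc, ← sub_div]
  congr 1
  rw [Finset.mul_sum, ← Finset.sum_sub_distrib]
  exact Finset.sum_congr rfl fun w _ => by ring

lemma gam_shift_left (f h : V → ℝ) (c : ℝ) (v : V) :
    gam (nLap G) (fun w => f w - c) h v = gam (nLap G) f h v := by
  rw [gam_eq, gam_eq]
  have e1 : (fun w => f w - c) * h = fun w => (f * h) w - c * h w := by
    funext w; simp only [Pi.mul_apply]; ring
  rw [e1, nLap_lin, nLap_shift]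
  ring

lemma gam2_shift (f : V → ℝ) (x : V) :
    gam2 (nLap G) (fun v => f v - f x) (fun v => f v - f x) x = gam2 (nLap G) f f x := by
  have hL : nLap G (fun v => f v - f x) = nLap G f := funext fun v => nLap_shift G f (f x) v
  have hgg : gam (nLap G) (fun v => f v - f x) (fun v => f v - f x)
      = gam (nLap G) f f := by
    funext v
    rw [gam_shift_left, gam_comm, gam_shift_left, gam_comm]
  rw [gam2_eq, gam2_eq, hgg, hL, gam_shift_left,
    gam_comm (nLap G) (nLap G f) (fun v => f v - f x), gam_shift_left,
    gam_comm (nLap G) f (nLap G f)]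


lemma key (hd : ∀ v : V, 0 < G.degree v) (x : V) (f : V → ℝ) (hfx : f x = 0) :
    4 * (G.degree x : ℝ) ^ 2 * gam2 (nLap G) f f x
      = (∑ y ∈ G.neighborFinset x,
          ((G.degree x : ℝ) / (G.degree y : ℝ)) * ∑ w ∈ G.neighborFinset y, (f w - 2 * f y) ^ 2)
        - 2 * (G.degree x : ℝ) * ∑ y ∈ G.neighborFinset x, (f y) ^ 2
        + 2 * (∑ y ∈ G.neighborFinset x, f y) ^ 2 := by
  have hd0 : ∀ v : V, (G.degree v : ℝ) ≠ 0 := fun v => Nat.cast_ne_zero.mpr (hd v).ne'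
  have step3 : ∀ y ∈ G.neighborFinset x,
      gam (nLap G) f f y - f y * nLap G f y
        = (∑ w ∈ G.neighborFinset y, (f w - 2 * f y) ^ 2) / (G.degree y : ℝ) / 2
          - f y ^ 2 / 2 := by
    intro y _
    rw [gam_self G f y (hd0 y), nLap_eq]
    have h1 : ∑ w ∈ G.neighborFinset y, (f w - 2 * f y) ^ 2
        = (∑ w ∈ G.neighborFinset y, (f w - f y) ^ 2)
          - 2 * f y * (∑ w ∈ G.neighborFinset y, f w)
          + (G.degree y : ℝ) * (3 * f y ^ 2) := by
      rw [Finset.mul_sum, ← Finset.sum_sub_distrib,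
        ← SimpleGraph.card_neighborFinset_eq_degree, ← nsmul_eq_mul, ← Finset.sum_const,
        ← Finset.sum_add_distrib]
      exact Finset.sum_congr rfl fun w _ => by ring
    rw [h1]
    field_simp [hd0 y]
    ring
  have hgx : gam (nLap G) f f x = (∑ y ∈ G.neighborFinset x, f y ^ 2) / (2 * (G.degree x : ℝ)) := by
    rw [gam_self G f x (hd0 x)]
    congr 1
    exact Finset.sum_congr rfl fun y _ => by rw [hfx]; ring
  have hLx : nLap G f x = (∑ y ∈ G.neighborFinset x, f y) / (G.degree x : ℝ) := by
    rw [nLap_eq, hfx]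
    ring
  have A2 : gam (nLap G) f (nLap G f) x
      = ((∑ y ∈ G.neighborFinset x, f y * nLap G f y) / (G.degree x : ℝ)
          - ((∑ y ∈ G.neighborFinset x, f y) / (G.degree x : ℝ)) ^ 2) / 2 := by
    rw [gam_eq, hLx, hfx]
    have hfL : nLap G (f * nLap G f) x
        = (∑ y ∈ G.neighborFinset x, f y * nLap G f y) / (G.degree x : ℝ) := by
      rw [nLap_eq]
      have h0 : (f * nLap G f) x = 0 := by simp [Pi.mul_apply, hfx]
      rw [h0]
      have h2 : ∑ y ∈ G.neighborFinset x, (f * nLap G f) y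
          = ∑ y ∈ G.neighborFinset x, f y * nLap G f y :=
        Finset.sum_congr rfl fun y _ => rfl
      rw [h2]
      ring
    rw [hfL]
    ring
  have P1 := nLap_eq G (gam (nLap G) f f) x
  have E2 : (∑ y ∈ G.neighborFinset x, gam (nLap G) f f y)
      = (∑ y ∈ G.neighborFinset x,
          ((∑ w ∈ G.neighborFinset y, (f w - 2 * f y) ^ 2) / (G.degree y : ℝ))) / 2
        - (∑ y ∈ G.neighborFinset x, f y ^ 2) / 2
        + ∑ y ∈ G.neighborFinset x, f y * nLap G f y := by
    have e : (∑ y ∈ G.neighborFinset x, gam (nLap G) f f y)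
        - (∑ y ∈ G.neighborFinset x, f y * nLap G f y)
        = ∑ y ∈ G.neighborFinset x,
            ((∑ w ∈ G.neighborFinset y, (f w - 2 * f y) ^ 2) / (G.degree y : ℝ) / 2
              - f y ^ 2 / 2) := by
      rw [← Finset.sum_sub_distrib]
      exact Finset.sum_congr rfl step3
    rw [Finset.sum_sub_distrib, ← Finset.sum_div, ← Finset.sum_div] at e
    linarith [e]
  have E3 : ∑ y ∈ G.neighborFinset x,
        ((G.degree x : ℝ) / (G.degree y : ℝ)) * ∑ w ∈ G.neighborFinset y, (f w - 2 * f y) ^ 2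
      = (G.degree x : ℝ) * ∑ y ∈ G.neighborFinset x,
          ((∑ w ∈ G.neighborFinset y, (f w - 2 * f y) ^ 2) / (G.degree y : ℝ)) := by
    rw [Finset.mul_sum]
    exact Finset.sum_congr rfl fun y _ => by rw [div_mul_eq_mul_div, mul_div_assoc]
  rw [gam2_eq, gam_comm (nLap G) (nLap G f) f, P1, A2, hgx, E2, E3]
  generalize (∑ y ∈ G.neighborFinset x,
      (∑ w ∈ G.neighborFinset y, (f w - 2 * f y) ^ 2) / ((G.degree y : ℝ))) = U
  generalize (∑ y ∈ G.neighborFinset x, f y * nLap G f y) = W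
  generalize (∑ y ∈ G.neighborFinset x, f y ^ 2) = T
  generalize (∑ y ∈ G.neighborFinset x, f y) = S
  have hD : ((G.degree x : ℝ)) ≠ 0 := hd0 x
  generalize ((G.degree x : ℝ)) = D at hD ⊢
  field_simp [hD]
  ring


lemma combo [DecidableEq V] (hd : ∀ v : V, 0 < G.degree v) (x : V) (f : V → ℝ) (hfx : f x = 0) :
    4 * (G.degree x : ℝ) ^ 2 * gam2 (nLap G) f f x
      = ((∑ y ∈ G.neighborFinset x, ∑ z ∈ (G.neighborFinset x).filter (G.Adj y),
            ((G.degree x : ℝ) / (G.degree y : ℝ)) * (2 * f y - f z) ^ 2)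
        + 4 * ∑ y ∈ G.neighborFinset x, ((G.degree x : ℝ) / (G.degree y : ℝ)) * (f y) ^ 2
        + 2 * (∑ y ∈ G.neighborFinset x, f y) ^ 2
        - 2 * (G.degree x : ℝ) * ∑ y ∈ G.neighborFinset x, (f y) ^ 2)
        + ∑ y ∈ G.neighborFinset x, ((G.degree x : ℝ) / (G.degree y : ℝ)) *
            ∑ w ∈ ((G.neighborFinset y).erase x).filter (fun w => w ∉ G.neighborFinset x),
              (f w - 2 * f y) ^ 2 := by
  rw [key G hd x f hfx]
  have split : ∀ y ∈ G.neighborFinset x,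
      ((G.degree x : ℝ) / (G.degree y : ℝ)) * ∑ w ∈ G.neighborFinset y, (f w - 2 * f y) ^ 2
        = (∑ z ∈ (G.neighborFinset x).filter (G.Adj y),
              ((G.degree x : ℝ) / (G.degree y : ℝ)) * (2 * f y - f z) ^ 2)
          + 4 * (((G.degree x : ℝ) / (G.degree y : ℝ)) * f y ^ 2)
          + ((G.degree x : ℝ) / (G.degree y : ℝ)) *
              ∑ w ∈ ((G.neighborFinset y).erase x).filter (fun w => w ∉ G.neighborFinset x),
                (f w - 2 * f y) ^ 2 := by
    intro y hy
    have hx_mem : x ∈ G.neighborFinset y := by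
      rw [SimpleGraph.mem_neighborFinset]
      exact ((SimpleGraph.mem_neighborFinset _ _ _).mp hy).symm
    have hfil : ((G.neighborFinset y).erase x).filter (fun w => w ∈ G.neighborFinset x)
        = (G.neighborFinset x).filter (G.Adj y) := by
      ext z
      simp only [Finset.mem_filter, Finset.mem_erase, SimpleGraph.mem_neighborFinset]
      constructor
      · rintro ⟨⟨hzx, hyz⟩, hxz⟩; exact ⟨hxz, hyz⟩
      · rintro ⟨hxz, hyz⟩; exact ⟨⟨hxz.ne', hyz⟩, hxz⟩
    have hflip : ∑ z ∈ (G.neighborFinset x).filter (G.Adj y), (f z - 2 * f y) ^ 2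
        = ∑ z ∈ (G.neighborFinset x).filter (G.Adj y), (2 * f y - f z) ^ 2 :=
      Finset.sum_congr rfl fun z _ => by ring
    conv_lhs => rw [← Finset.insert_erase hx_mem,
      Finset.sum_insert (Finset.notMem_erase _ _),
      ← Finset.sum_filter_add_sum_filter_not ((G.neighborFinset y).erase x)
        (fun w => w ∈ G.neighborFinset x), hfil]
    rw [hfx, hflip, ← Finset.mul_sum]
    ring
  rw [Finset.sum_congr rfl split, Finset.sum_add_distrib, Finset.sum_add_distrib,
    ← Finset.mul_sum]
  ring


end helpers

/-- For the unweighted normalized Laplacian on a `C₄`-free graph, `CD(0,∞)` at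
`x` is equivalent to a condition involving only the values of `f` on `S₁(x)`. -/
theorem stmt_9 (G : SimpleGraph V) [G.LocallyFinite] [DecidableRel G.Adj]
    (hC4 : C4Free G) (hd : ∀ v : V, 0 < G.degree v) (x : V) :
    (∀ f : V → ℝ, 0 ≤ gam2 (nLap G) f f x) ↔
      (∀ f : V → ℝ,
        0 ≤ ∑ y ∈ G.neighborFinset x,
              ∑ z ∈ (G.neighborFinset x).filter (G.Adj y),
                ((G.degree x : ℝ) / (G.degree y : ℝ)) * (2 * f y - f z) ^ 2
          + 4 * ∑ y ∈ G.neighborFinset x,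
              ((G.degree x : ℝ) / (G.degree y : ℝ)) * (f y) ^ 2
          + 2 * (∑ y ∈ G.neighborFinset x, f y) ^ 2
          - 2 * (G.degree x : ℝ) * ∑ y ∈ G.neighborFinset x, (f y) ^ 2) := by
  classical
  have hd0 : ∀ v : V, (G.degree v : ℝ) ≠ 0 := fun v => Nat.cast_ne_zero.mpr (hd v).ne'
  have hD : (0 : ℝ) < (G.degree x : ℝ) := by exact_mod_cast hd x
  constructor
  · intro h f
    set F : V → ℝ := fun z =>
      if z = x then 0
      else if G.Adj x z then f z
      else if hz : ∃ y, G.Adj x y ∧ G.Adj y z then 2 * f hz.choose else 0 with hFdef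
    have hFx : F x = 0 := by simp [hFdef]
    have hFy : ∀ y ∈ G.neighborFinset x, F y = f y := by
      intro y hy
      rw [SimpleGraph.mem_neighborFinset] at hy
      simp only [hFdef]
      rw [if_neg hy.ne', if_pos hy]
    have hExtra : ∀ y ∈ G.neighborFinset x,
        ∑ w ∈ ((G.neighborFinset y).erase x).filter (fun w => w ∉ G.neighborFinset x),
          (F w - 2 * F y) ^ 2 = 0 := by
      intro y hy
      apply Finset.sum_eq_zero
      intro w hw
      simp only [Finset.mem_filter, Finset.mem_erase, SimpleGraph.mem_neighborFinset] at hw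
      obtain ⟨⟨hwx, hyw⟩, hnadj⟩ := hw
      have hxy : G.Adj x y := (SimpleGraph.mem_neighborFinset _ _ _).mp hy
      have hex : ∃ c, G.Adj x c ∧ G.Adj c w := ⟨y, hxy, hyw⟩
      have hFw : F w = 2 * f y := by
        simp only [hFdef]
        rw [if_neg hwx, if_neg hnadj, dif_pos hex]
        have hc := hex.choose_spec
        have hcy : hex.choose = y :=
          hC4 (show x ≠ w from fun e => hwx e.symm) hc.1 hc.2 hxy hyw
        rw [hcy]
      rw [hFw, hFy y hy]
      ring
    have hkey := combo G hd x F hFx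
    have hE0 : ∑ y ∈ G.neighborFinset x, ((G.degree x : ℝ) / (G.degree y : ℝ)) *
        ∑ w ∈ ((G.neighborFinset y).erase x).filter (fun w => w ∉ G.neighborFinset x),
          (F w - 2 * F y) ^ 2 = 0 :=
      Finset.sum_eq_zero fun y hy => by rw [hExtra y hy, mul_zero]
    rw [hE0, add_zero] at hkey
    have s1 : ∑ y ∈ G.neighborFinset x, ∑ z ∈ (G.neighborFinset x).filter (G.Adj y),
          ((G.degree x : ℝ) / (G.degree y : ℝ)) * (2 * F y - F z) ^ 2
        = ∑ y ∈ G.neighborFinset x, ∑ z ∈ (G.neighborFinset x).filter (G.Adj y),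
          ((G.degree x : ℝ) / (G.degree y : ℝ)) * (2 * f y - f z) ^ 2 :=
      Finset.sum_congr rfl fun y hy => Finset.sum_congr rfl fun z hz => by
        rw [hFy y hy, hFy z (Finset.mem_filter.mp hz).1]
    have s2 : ∑ y ∈ G.neighborFinset x, ((G.degree x : ℝ) / (G.degree y : ℝ)) * (F y) ^ 2
        = ∑ y ∈ G.neighborFinset x, ((G.degree x : ℝ) / (G.degree y : ℝ)) * (f y) ^ 2 :=
      Finset.sum_congr rfl fun y hy => by rw [hFy y hy]
    have s3 : ∑ y ∈ G.neighborFinset x, F y = ∑ y ∈ G.neighborFinset x, f y :=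
      Finset.sum_congr rfl fun y hy => hFy y hy
    have s4 : ∑ y ∈ G.neighborFinset x, (F y) ^ 2
        = ∑ y ∈ G.neighborFinset x, (f y) ^ 2 :=
      Finset.sum_congr rfl fun y hy => by rw [hFy y hy]
    rw [s1, s2, s3, s4] at hkey
    have hnn : 0 ≤ 4 * (G.degree x : ℝ) ^ 2 * gam2 (nLap G) F F x :=
      mul_nonneg (by positivity) (h F)
    linarith [hkey ▸ hnn]
  · intro h f
    have hgx : (fun v => f v - f x) x = 0 := by simp
    have hkey := combo G hd x (fun v => f v - f x) hgx
    have hQ := h (fun v => f v - f x)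
    have hE : 0 ≤ ∑ y ∈ G.neighborFinset x, ((G.degree x : ℝ) / (G.degree y : ℝ)) *
        ∑ w ∈ ((G.neighborFinset y).erase x).filter (fun w => w ∉ G.neighborFinset x),
          ((fun v => f v - f x) w - 2 * (fun v => f v - f x) y) ^ 2 :=
      Finset.sum_nonneg fun y _ =>
        mul_nonneg (div_nonneg (Nat.cast_nonneg _) (Nat.cast_nonneg _))
          (Finset.sum_nonneg fun w _ => sq_nonneg _)
    have h4 : (0 : ℝ) < 4 * (G.degree x : ℝ) ^ 2 := by positivity
    rw [← gam2_shift G f x]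
    nlinarith [hkey, hQ, hE, h4]
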